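/- Let G be a strongly connected simple digraph with maximum outdegree Δ⁺ and α ∈ [0,1). Then λ_α(G) > αΔ⁺. -/

import Mathlib

/-!
If a nonnegative matrix `M` admits a nonnegative vector `x ≠ 0` with `M x ≥ s x`, then
`‖M ^ k‖ ≥ s ^ k` in the `ℓ∞` operator norm, so Gelfand's formula gives `ρ(M) ≥ s`. For
`M = A_α(G)` and a vertex `u` of maximum outdegree such a vector exists with `s > αΔ⁺`: weight
each vertex by a power of a small `δ` according to its distance to `u`.
-/

open scoped Classical
open Matrix

/-- Spectral radius: largest modulus of (complex) eigenvalues, i.e. roots of the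
characteristic polynomial of the complexified matrix. -/
noncomputable def specRad {m : Type*} [Fintype m] [DecidableEq m] (M : Matrix m m ℝ) : ℝ :=
  sSup {r : ℝ | ∃ μ : ℂ, (M.map Complex.ofReal).charpoly.IsRoot μ ∧ r = ‖μ‖}

/-- Irreducibility of a matrix: the associated digraph is strongly connected. -/
def Irred {n : ℕ} (M : Matrix (Fin n) (Fin n) ℝ) : Prop :=
  ∀ i j : Fin n, Relation.ReflTransGen (fun a b => M a b ≠ 0) i j

/-- Outdegree of a vertex in a digraph on `Fin n`. -/
noncomputable def outdeg {n : ℕ} (G : Fin n → Fin n → Prop) (i : Fin n) : ℕ :=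
  (Finset.univ.filter (fun j => G i j)).card

/-- Indegree of a vertex. -/
noncomputable def indeg {n : ℕ} (G : Fin n → Fin n → Prop) (i : Fin n) : ℕ :=
  (Finset.univ.filter (fun j => G j i)).card

/-- The matrix `A_α(G) = α D(G) + (1-α) A(G)`. -/
noncomputable def Aalpha {n : ℕ} (α : ℝ) (G : Fin n → Fin n → Prop) :
    Matrix (Fin n) (Fin n) ℝ :=
  α • Matrix.diagonal (fun i => (outdeg G i : ℝ)) +
    (1 - α) • (Matrix.of fun i j => if G i j then (1 : ℝ) else 0)

/-- The `A_α` spectral radius of a digraph. -/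
noncomputable def lamAlpha {n : ℕ} (α : ℝ) (G : Fin n → Fin n → Prop) : ℝ :=
  specRad (Aalpha α G)

/-- Strong connectivity of a digraph. -/
def SConn {n : ℕ} (G : Fin n → Fin n → Prop) : Prop :=
  ∀ u v : Fin n, Relation.ReflTransGen G u v

/-- Isomorphism of digraphs on `Fin n`. -/
def DIso {n : ℕ} (G H : Fin n → Fin n → Prop) : Prop :=
  ∃ e : Equiv.Perm (Fin n), ∀ u v, G u v ↔ H (e u) (e v)

/-- The directed cycle on `Fin n`. -/
def dirCycle (n : ℕ) : Fin n → Fin n → Prop :=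
  fun i j => j.val = (i.val + 1) % n


/-- Deleting a set of vertices from a digraph. -/
def delVerts {n : ℕ} (G : Fin n → Fin n → Prop) (S : Finset (Fin n)) :
    Fin n → Fin n → Prop :=
  fun a b => G a b ∧ a ∉ S ∧ b ∉ S

/-- The digraph obtained by deleting the vertices of `S` is strongly connected. -/
def SConnAvoid {n : ℕ} (G : Fin n → Fin n → Prop) (S : Finset (Fin n)) : Prop :=
  ∀ u v : Fin n, u ∉ S → v ∉ S → Relation.ReflTransGen (delVerts G S) u v

/-- The vertex connectivity of `G` equals `k`. -/
def vertexConnIs {n : ℕ} (G : Fin n → Fin n → Prop) (k : ℕ) : Prop :=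
  (∃ S : Finset (Fin n), S.card = k ∧ ¬ SConnAvoid G S) ∧
    ∀ S : Finset (Fin n), ¬ SConnAvoid G S → k ≤ S.card

/-- Deleting a set of arcs from a digraph. -/
def delArcs {n : ℕ} (G : Fin n → Fin n → Prop) (S : Finset (Fin n × Fin n)) :
    Fin n → Fin n → Prop :=
  fun a b => G a b ∧ (a, b) ∉ S

/-- The arc connectivity of `G` equals `k`. -/
def arcConnIs {n : ℕ} (G : Fin n → Fin n → Prop) (k : ℕ) : Prop :=
  (∃ S : Finset (Fin n × Fin n), S.card = k ∧ ¬ SConn (delArcs G S)) ∧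
    ∀ S : Finset (Fin n × Fin n), ¬ SConn (delArcs G S) → k ≤ S.card

/-- `G` contains a directed cycle of length `g`. -/
def hasCycleLen {n : ℕ} (G : Fin n → Fin n → Prop) (g : ℕ) : Prop :=
  ∃ c : Fin g → Fin n, Function.Injective c ∧
    ∀ i : Fin g, G (c i) (c ⟨(i.val + 1) % g, Nat.mod_lt _ i.pos⟩)

/-- The girth of `G` equals `g`. -/
def girthIs {n : ℕ} (G : Fin n → Fin n → Prop) (g : ℕ) : Prop :=
  hasCycleLen G g ∧ ∀ m, 0 < m → m < g → ¬ hasCycleLen G m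

/-- The clique number of `G` equals `d`. -/
def cliqueNumIs {n : ℕ} (G : Fin n → Fin n → Prop) (d : ℕ) : Prop :=
  (∃ S : Finset (Fin n), S.card = d ∧ ∀ u ∈ S, ∀ v ∈ S, u ≠ v → G u v ∧ G v u) ∧
    ∀ S : Finset (Fin n), (∀ u ∈ S, ∀ v ∈ S, u ≠ v → G u v ∧ G v u) → S.card ≤ d

/-- The digraph `C_{n,g}`: the directed cycle `v_1 … v_g v_1` (indices `0,…,g-1`)
together with the directed path `v_g v_{g+1} … v_n v_1`. -/
def Cng (n g : ℕ) : Fin n → Fin n → Prop := fun i j =>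
  j.val = i.val + 1 ∨ (i.val = g - 1 ∧ j.val = 0) ∨ (i.val = n - 1 ∧ j.val = 0)

/-- `C'_{n,g} = C_{n,g} - {(v_n, v_1)} + {(v_n, v_g)}`. -/
def Cng' (n g : ℕ) : Fin n → Fin n → Prop := fun i j =>
  j.val = i.val + 1 ∨ (i.val = g - 1 ∧ j.val = 0) ∨ (i.val = n - 1 ∧ j.val = g - 1)

/-- The digraph `B_{n,d}`: a complete digraph on the `d` vertices
`{0} ∪ {n-d+1, …, n-1}` together with the directed path `v_1 v_2 … v_{n-d+2}`
(indices `0, 1, …, n-d+1`). -/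
def Bnd (n d : ℕ) : Fin n → Fin n → Prop := fun i j =>
  (j.val = i.val + 1 ∧ j.val ≤ n - d + 1) ∨
    (i ≠ j ∧ (i.val = 0 ∨ n - d + 1 ≤ i.val) ∧ (j.val = 0 ∨ n - d + 1 ≤ j.val))

/-- `B'_{n,d} = B_{n,d} - {(v_{n-d+1}, v_{n-d+2})} + {(v_{n-d+1}, v_1)}`. -/
def Bnd' (n d : ℕ) : Fin n → Fin n → Prop := fun i j =>
  (j.val = i.val + 1 ∧ j.val ≤ n - d) ∨ (i.val = n - d ∧ j.val = 0) ∨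
    (i ≠ j ∧ (i.val = 0 ∨ n - d + 1 ≤ i.val) ∧ (j.val = 0 ∨ n - d + 1 ≤ j.val))

/-- The digraph `K(n,k,m)`: parts `K_m` (indices `< m`), `K_k` (indices in `[m, m+k)`),
`K_{n-k-m}` (indices `≥ m+k`); all parts complete, `K_k` joined both ways to the others,
and all one-way arcs from `K_m` to `K_{n-k-m}`. -/
def Knkm (n k m : ℕ) : Fin n → Fin n → Prop := fun i j =>
  i ≠ j ∧ ¬(m + k ≤ i.val ∧ j.val < m)

attribute [local instance] Matrix.linftyOpNormedRing Matrix.linftyOpNormedAlgebra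

open Filter

section Descent

variable {V : Type*}

def HasWalkOfLength (r : V → V → Prop) : ℕ → V → V → Prop
  | 0 => fun a b => a = b
  | k + 1 => fun a b => ∃ c, r a c ∧ HasWalkOfLength r k c b

theorem Relation.ReflTransGen.exists_hasWalkOfLength {r : V → V → Prop} {a b : V}
    (h : Relation.ReflTransGen r a b) : ∃ k, HasWalkOfLength r k a b := by
  induction h using Relation.ReflTransGen.head_induction_on with
  | refl => exact ⟨0, rfl⟩
  | head hac _ ih => obtain ⟨k, hk⟩ := ih; exact ⟨k + 1, _, hac, hk⟩

theorem exists_rank_decreasing_toward {r : V → V → Prop} {u : V}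
    (h : ∀ i, Relation.ReflTransGen r i u) :
    ∃ d : V → ℕ, d u = 0 ∧ ∀ i, i ≠ u → ∃ j, r i j ∧ d j < d i := by
  classical
  have hwalk i := (h i).exists_hasWalkOfLength
  refine ⟨fun i => Nat.find (hwalk i), (Nat.find_eq_zero _).mpr rfl, fun i hi => ?_⟩
  obtain ⟨m, hm⟩ : ∃ m, Nat.find (hwalk i) = m + 1 :=
    Nat.exists_eq_add_one.mpr (Nat.pos_of_ne_zero fun h0 => hi ((Nat.find_eq_zero _).mp h0))
  obtain ⟨j, hij, hj⟩ : HasWalkOfLength r (m + 1) i u := hm ▸ Nat.find_spec (hwalk i)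
  exact ⟨j, hij, show Nat.find (hwalk j) < Nat.find (hwalk i) from
    hm ▸ Nat.lt_succ_of_le (Nat.find_min' _ hj)⟩

end Descent

section SpectralRadius

theorem ofReal_le_spectralRadius_of_pow_le_norm {A : Type*} [NormedRing A] [NormedAlgebra ℂ A]
    [CompleteSpace A] {a : A} {s : ℝ} (hs : 0 ≤ s) (h : ∀ k : ℕ, s ^ k ≤ ‖a ^ k‖) :
    ENNReal.ofReal s ≤ spectralRadius ℂ a := by
  refine ge_of_tendsto (spectrum.pow_norm_pow_one_div_tendsto_nhds_spectralRadius a) ?_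
  filter_upwards [eventually_ne_atTop 0] with k hk
  refine ENNReal.ofReal_le_ofReal ?_
  calc s = (s ^ k) ^ (1 / k : ℝ) := by rw [one_div, Real.pow_rpow_inv_natCast hs hk]
    _ ≤ ‖a ^ k‖ ^ (1 / k : ℝ) := by gcongr; exact h k

variable {ι : Type*} [Fintype ι]

theorem Matrix.mulVec_mono_of_nonneg {M : Matrix ι ι ℝ} (hM : ∀ i j, 0 ≤ M i j) {v w : ι → ℝ}
    (hvw : v ≤ w) : M *ᵥ v ≤ M *ᵥ w := fun i =>
  Finset.sum_le_sum fun j _ => mul_le_mul_of_nonneg_left (hvw j) (hM i j)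

theorem Matrix.norm_map_ofReal (M : Matrix ι ι ℝ) : ‖M.map Complex.ofReal‖ = ‖M‖ := by
  simp only [Matrix.linfty_opNorm_def, Matrix.map_apply, Complex.nnnorm_real]

variable [DecidableEq ι]

theorem spectralRadius_map_ofReal_le_specRad (M : Matrix ι ι ℝ) :
    spectralRadius ℂ (M.map Complex.ofReal) ≤ ENNReal.ofReal (specRad M) := by
  have hfin : {r : ℝ | ∃ μ : ℂ, (M.map Complex.ofReal).charpoly.IsRoot μ ∧ r = ‖μ‖}.Finite := by
    convert (Polynomial.finite_setOfPred_isRoot (M.map Complex.ofReal).charpoly_monic.ne_zero).image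
      (fun μ : ℂ => ‖μ‖) using 1
    ext r
    simp [eq_comm]
  refine iSup₂_le fun μ hμ => ?_
  rw [← enorm_eq_nnnorm, ← ofReal_norm]
  exact ENNReal.ofReal_le_ofReal <|
    le_csSup hfin.bddAbove ⟨μ, Matrix.mem_spectrum_iff_isRoot_charpoly.mp hμ, rfl⟩

theorem pow_le_norm_pow_of_smul_le_mulVec {M : Matrix ι ι ℝ} (hM : ∀ i j, 0 ≤ M i j)
    {x : ι → ℝ} (hx : 0 ≤ x) (hx0 : x ≠ 0) {s : ℝ} (hs : 0 ≤ s) (h : s • x ≤ M *ᵥ x) (k : ℕ) :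
    s ^ k ≤ ‖M ^ k‖ := by
  have hiter : ∀ k : ℕ, s ^ k • x ≤ M ^ k *ᵥ x := by
    intro k
    induction k with
    | zero => simp
    | succ k ih =>
      calc s ^ (k + 1) • x = s ^ k • (s • x) := by rw [pow_succ, mul_smul]
        _ ≤ s ^ k • (M *ᵥ x) := smul_le_smul_of_nonneg_left h (by positivity)
        _ = M *ᵥ (s ^ k • x) := by rw [Matrix.mulVec_smul]
        _ ≤ M *ᵥ (M ^ k *ᵥ x) := Matrix.mulVec_mono_of_nonneg hM ih
        _ = M ^ (k + 1) *ᵥ x := by rw [Matrix.mulVec_mulVec, pow_succ']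
  have hnorm : s ^ k * ‖x‖ ≤ ‖M ^ k *ᵥ x‖ := by
    rw [← Real.norm_of_nonneg (pow_nonneg hs k), ← norm_smul]
    refine (pi_norm_le_iff_of_nonneg (norm_nonneg _)).mpr fun i => ?_
    have hi : 0 ≤ (s ^ k • x) i := smul_nonneg (pow_nonneg hs k) (hx i)
    rw [Real.norm_of_nonneg hi]
    exact (hiter k i).trans ((le_abs_self _).trans (norm_le_pi_norm (M ^ k *ᵥ x) i))
  exact le_of_mul_le_mul_right (hnorm.trans (Matrix.linfty_opNorm_mulVec _ _))
    (norm_pos_iff.mpr hx0)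

theorem le_specRad_of_smul_le_mulVec {M : Matrix ι ι ℝ} (hM : ∀ i j, 0 ≤ M i j)
    {x : ι → ℝ} (hx : 0 ≤ x) (hx0 : x ≠ 0) {s : ℝ} (hs : 0 ≤ s) (h : s • x ≤ M *ᵥ x) :
    s ≤ specRad M := by
  have hpow k : s ^ k ≤ ‖(M.map Complex.ofReal) ^ k‖ := by
    have hmap : (M.map Complex.ofReal) ^ k = (M ^ k).map Complex.ofReal :=
      (map_pow Complex.ofRealHom.mapMatrix M k).symm
    rw [hmap, Matrix.norm_map_ofReal]
    exact pow_le_norm_pow_of_smul_le_mulVec hM hx hx0 hs h k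
  have hρ := (ofReal_le_spectralRadius_of_pow_le_norm hs hpow).trans
    (spectralRadius_map_ofReal_le_specRad M)
  refine (ENNReal.ofReal_le_ofReal_iff (Real.sSup_nonneg ?_)).mp hρ
  rintro r ⟨μ, -, rfl⟩
  exact norm_nonneg μ

end SpectralRadius

section AlphaMatrix

variable {n : ℕ} {α : ℝ} {G : Fin n → Fin n → Prop}

theorem Aalpha_apply_nonneg (hα0 : 0 ≤ α) (hα1 : α ≤ 1) (i j : Fin n) : 0 ≤ Aalpha α G i j := by
  have h1α : 0 ≤ 1 - α := by linarith
  simp only [Aalpha, Matrix.add_apply, Matrix.smul_apply, Matrix.diagonal_apply,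
    Matrix.of_apply, smul_eq_mul]
  split_ifs <;> positivity

theorem Aalpha_mulVec_apply (v : Fin n → ℝ) (i : Fin n) :
    (Aalpha α G *ᵥ v) i =
      α * outdeg G i * v i + (1 - α) * ∑ j ∈ Finset.univ.filter (G i), v j := by
  rw [Aalpha, Matrix.add_mulVec, Matrix.smul_mulVec, Matrix.smul_mulVec, Pi.add_apply,
    Pi.smul_apply, Pi.smul_apply, Matrix.mulVec_diagonal, smul_eq_mul, smul_eq_mul, mul_assoc,
    Finset.sum_filter]
  simp [Matrix.mulVec, dotProduct]

theorem exists_adj_of_sConn (hn : 2 ≤ n) (hSC : SConn G) (u : Fin n) : ∃ j, G u j := by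
  have : Nontrivial (Fin n) := Fin.nontrivial_iff_two_le.mpr hn
  obtain ⟨v, hv⟩ := exists_ne u
  rcases (hSC u v).cases_head with h | ⟨j, hj, -⟩
  · exact absurd h hv.symm
  · exact ⟨j, hj⟩

/-- The witness is `x i = δ ^ d i`, with `δ = (1 - α) / (α d⁺(u) + 1)` chosen so that
`(1 - α) x j ≥ (α d⁺(u) + 1) x i` along every step `i → j` that decreases `d`; at `u` the arc to
`j₀` gives the slack `(1 - α) x j₀` over `α d⁺(u)`. -/
theorem exists_smul_le_Aalpha_mulVec (hα0 : 0 ≤ α) (hα1 : α < 1) {u j₀ : Fin n} (hj₀ : G u j₀)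
    {d : Fin n → ℕ} (hdu : d u = 0) (hd : ∀ i, i ≠ u → ∃ j, G i j ∧ d j < d i) :
    ∃ s, α * outdeg G u < s ∧
      ∃ x : Fin n → ℝ, 0 ≤ x ∧ x ≠ 0 ∧ s • x ≤ Aalpha α G *ᵥ x := by
  set c : ℝ := α * outdeg G u
  have h1α : 0 < 1 - α := by linarith
  have hc : 0 ≤ c := by positivity
  set δ : ℝ := (1 - α) / (c + 1)
  have hδ0 : 0 < δ := by positivity
  have hδ1 : δ ≤ 1 := (div_le_one (by positivity)).mpr (by linarith)
  have hcδ : (c + 1) * δ = 1 - α := mul_div_cancel₀ _ (by positivity)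
  set x : Fin n → ℝ := fun i => δ ^ d i
  have hx0 i : 0 < x i := pow_pos hδ0 _
  have hx1 i : x i ≤ 1 := pow_le_one₀ hδ0.le hδ1
  have hsum {i j} (hij : G i j) : x j ≤ ∑ j ∈ Finset.univ.filter (G i), x j :=
    Finset.single_le_sum (fun j _ => (hx0 j).le) (Finset.mem_filter.mpr ⟨Finset.mem_univ _, hij⟩)
  refine ⟨c + (1 - α) * x j₀, lt_add_of_pos_right _ (mul_pos h1α (hx0 j₀)), x, fun i => (hx0 i).le,
    fun h => (hx0 u).ne' (congrFun h u), fun i => ?_⟩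
  rw [Pi.smul_apply, smul_eq_mul, Aalpha_mulVec_apply]
  by_cases hiu : i = u
  · subst hiu
    have hxu : x i = 1 := by simp [x, hdu]
    rw [hxu]
    nlinarith [hsum hj₀]
  · obtain ⟨j, hij, hdj⟩ := hd i hiu
    have hxij : x i ≤ δ * x j := by
      calc x i ≤ δ ^ (d j + 1) := pow_le_pow_of_le_one hδ0.le hδ1 hdj
        _ = δ * x j := pow_succ' δ (d j)
    have hs : c + (1 - α) * x j₀ ≤ c + 1 := by nlinarith [hx1 j₀]
    calc (c + (1 - α) * x j₀) * x i ≤ (c + 1) * (δ * x j) := by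
          gcongr
      _ = (1 - α) * x j := by rw [← mul_assoc, hcδ]
      _ ≤ α * outdeg G i * x i + (1 - α) * ∑ j ∈ Finset.univ.filter (G i), x j := by
          have hdiag : 0 ≤ α * outdeg G i * x i := mul_nonneg (by positivity) (hx0 i).le
          nlinarith [mul_le_mul_of_nonneg_left (hsum hij) h1α.le]

end AlphaMatrix

theorem stmt5_general {n : ℕ} (hn : 2 ≤ n) (α : ℝ) (hα0 : 0 ≤ α) (hα1 : α < 1)
    (G : Fin n → Fin n → Prop) (hSC : SConn G) :
    α * ((Finset.univ.sup fun i => outdeg G i : ℕ) : ℝ) < lamAlpha α G := by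
  obtain ⟨u, -, hu⟩ := Finset.exists_mem_eq_sup Finset.univ
    (Finset.univ_nonempty_iff.mpr ⟨⟨0, by omega⟩⟩) (outdeg G)
  obtain ⟨j₀, hj₀⟩ := exists_adj_of_sConn hn hSC u
  obtain ⟨d, hdu, hd⟩ := exists_rank_decreasing_toward fun i => hSC i u
  obtain ⟨s, hs, x, hx, hx0, hsx⟩ := exists_smul_le_Aalpha_mulVec hα0 hα1 hj₀ hdu hd
  rw [hu]
  exact hs.trans_le <| le_specRad_of_smul_le_mulVec (Aalpha_apply_nonneg hα0 hα1.le) hx hx0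
    ((mul_nonneg hα0 (Nat.cast_nonneg _)).trans hs.le) hsx

/-- `λ_α(G) > α Δ⁺` for a strongly connected digraph `G`. -/
theorem stmt5 {n : ℕ} (hn : 2 ≤ n) (α : ℝ) (hα0 : 0 ≤ α) (hα1 : α < 1)
    (G : Fin n → Fin n → Prop) (hGs : ∀ i, ¬ G i i) (hSC : SConn G) :
    α * ((Finset.univ.sup fun i => outdeg G i : ℕ) : ℝ) < lamAlpha α G :=
  stmt5_general hn α hα0 hα1 G hSC
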